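/- (Contraction estimate) Let F : ℂⁿ → ℂⁿ be polynomial, I ∈ 𝕀ℂⁿ an interval vector, Y ∈ ℂ^{n×n}, and G_Y(x) = x − Y·F(x). Then for all z₀, z₁ ∈ I: ‖G_Y(z₀) − G_Y(z₁)‖_∞ ≤ √2 · ‖1ₙ − Y·□JF(I)‖_∞ · ‖z₀ − z₁‖_∞. -/

import Mathlib

open Set Pointwise

noncomputable section

/-- Pointwise addition of sets of reals. -/
def sadd (X Y : Set ℝ) : Set ℝ := Set.image2 (· + ·) X Y

/-- Pointwise subtraction of sets of reals. -/
def ssub (X Y : Set ℝ) : Set ℝ := Set.image2 (· - ·) X Y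

/-- Pointwise multiplication of sets of reals. -/
def smul' (X Y : Set ℝ) : Set ℝ := Set.image2 (· * ·) X Y

/-- The rectangular complex interval `X + iY`. -/
def cI (X Y : Set ℝ) : Set ℂ := {z | z.re ∈ X ∧ z.im ∈ Y}

/-- Real parts of a set of complex numbers. -/
def reS (S : Set ℂ) : Set ℝ := Complex.re '' S

/-- Imaginary parts of a set of complex numbers. -/
def imS (S : Set ℂ) : Set ℝ := Complex.im '' S

/-- Complex interval multiplication:
`(X+iY)·(W+iZ) = (X·W − Y·Z) + i(X·Z + Y·W)`. -/
def cmul (S T : Set ℂ) : Set ℂ :=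
  cI (ssub (smul' (reS S) (reS T)) (smul' (imS S) (imS T)))
     (sadd (smul' (reS S) (imS T)) (smul' (imS S) (reS T)))

/-- `S` is a rectangular complex interval. -/
def IsRect (S : Set ℂ) : Prop :=
  ∃ a b c d : ℝ, a ≤ b ∧ c ≤ d ∧ S = cI (Set.Icc a b) (Set.Icc c d)

variable {n : ℕ}

/-- The interval vector `I ∈ 𝕀ℂⁿ` determined by coordinate intervals `IV`. -/
def boxSet (IV : Fin n → Set ℂ) : Set (Fin n → ℂ) := {z | ∀ j, z j ∈ IV j}

/-- `F` is a square polynomial system. -/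
def IsPolyMap (F : (Fin n → ℂ) → Fin n → ℂ) : Prop :=
  ∀ i, ∃ p : MvPolynomial (Fin n) ℂ, ∀ z, F z i = MvPolynomial.eval z p

/-- The Jacobian matrix `JF(z)` of `F` at `z`. -/
def jac (F : (Fin n → ℂ) → Fin n → ℂ) (z : Fin n → ℂ) : Matrix (Fin n) (Fin n) ℂ :=
  fun i j => fderiv ℂ (fun w => F w i) z (Pi.single j 1)

/-- Entries of the interval matrix `1ₙ − Y·□JF(I)`, where `MJ` is the interval
enclosure of the Jacobian on `I`, computed in complex interval arithmetic. -/
def Bmat (Y : Matrix (Fin n) (Fin n) ℂ) (MJ : Fin n → Fin n → Set ℂ) :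
    Fin n → Fin n → Set ℂ :=
  fun i j => ({(if i = j then (1 : ℂ) else 0)} : Set ℂ) - ∑ k, cmul {Y i k} (MJ k j)

/-- Coordinates of the Krawczyk set
`K_{x,Y}(I) = x − Y·□F(x) + (1ₙ − Y·□JF(I))(I − x)`, where `FX` is the interval
enclosure `□F(x)` and `MJ` the interval enclosure `□JF(I)`. -/
def Kset (x : Fin n → ℂ) (Y : Matrix (Fin n) (Fin n) ℂ)
    (FX : Fin n → Set ℂ) (MJ : Fin n → Fin n → Set ℂ) (IV : Fin n → Set ℂ) :
    Fin n → Set ℂ :=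
  fun i => (({x i} : Set ℂ) - ∑ j, cmul {Y i j} (FX j)) +
      ∑ j, cmul ((IV j) - {x j}) (Bmat Y MJ i j)

/-- The `∞`-operator norm of a complex matrix (`Fin n → ℂ` carries the max norm). -/
def opNormInf (M : Matrix (Fin n) (Fin n) ℂ) : ℝ :=
  sSup {r | ∃ v : Fin n → ℂ, ‖v‖ = 1 ∧ r = ‖M.mulVec v‖}

/-- The norm `‖A‖_∞` of an interval matrix: the maximum of the `∞`-operator norms
over all matrices contained in it. -/
def imatNorm (B : Fin n → Fin n → Set ℂ) : ℝ :=
  sSup {r | ∃ M : Matrix (Fin n) (Fin n) ℂ, (∀ i j, M i j ∈ B i j) ∧ r = opNormInf M}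

/-!
`G_Y(z) = z − Y·F(z)` has derivative `1 − Y·JF(z)`, which for `z ∈ I` lies entrywise in the
interval matrix `1 − Y·□JF(I)`, so its `∞`-operator norm is at most `‖1 − Y·□JF(I)‖_∞`.
The mean value inequality on the convex box `I` then bounds `‖G_Y(z₀) − G_Y(z₁)‖_∞` by
`‖1 − Y·□JF(I)‖_∞ · ‖z₀ − z₁‖_∞`, and `1 ≤ √2`.
-/

open Bornology Matrix

lemma Convex.cI {X Y : Set ℝ} (hX : Convex ℝ X) (hY : Convex ℝ Y) : Convex ℝ (cI X Y) :=
  (hX.linear_preimage Complex.reLm).inter (hY.linear_preimage Complex.imLm)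

lemma IsRect.convex {S : Set ℂ} (h : IsRect S) : Convex ℝ S := by
  obtain ⟨a, b, c, d, -, -, rfl⟩ := h
  exact (convex_Icc a b).cI (convex_Icc c d)

lemma IsRect.isBounded {S : Set ℂ} (h : IsRect S) : IsBounded S := by
  obtain ⟨a, b, c, d, -, -, rfl⟩ := h
  exact (Metric.isBounded_Icc a b).reProdIm (Metric.isBounded_Icc c d)

lemma convex_boxSet {IV : Fin n → Set ℂ} (h : ∀ j, Convex ℝ (IV j)) : Convex ℝ (boxSet IV) :=
  fun _ hx _ hy _ _ ha hb hab j => h j (hx j) (hy j) ha hb hab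

lemma isBounded_cmul {S T : Set ℂ} (hS : IsBounded S) (hT : IsBounded T) :
    IsBounded (cmul S T) := by
  have hre : ∀ {U : Set ℂ}, IsBounded U → IsBounded (reS U) :=
    Complex.reCLM.lipschitz.isBounded_image
  have him : ∀ {U : Set ℂ}, IsBounded U → IsBounded (imS U) :=
    Complex.imCLM.lipschitz.isBounded_image
  exact
    (isBounded_sub (isBounded_mul (hre hS) (hre hT)) (isBounded_mul (him hS) (him hT))).reProdIm
      (isBounded_add (isBounded_mul (hre hS) (him hT)) (isBounded_mul (him hS) (hre hT)))

lemma mul_mem_cmul {a b : ℂ} {S T : Set ℂ} (ha : a ∈ S) (hb : b ∈ T) : a * b ∈ cmul S T := by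
  have hre : ∀ {w : ℂ} {U : Set ℂ}, w ∈ U → w.re ∈ reS U := fun hw => mem_image_of_mem _ hw
  have him : ∀ {w : ℂ} {U : Set ℂ}, w ∈ U → w.im ∈ imS U := fun hw => mem_image_of_mem _ hw
  constructor
  · rw [Complex.mul_re]
    exact mem_image2_of_mem (mem_image2_of_mem (hre ha) (hre hb))
      (mem_image2_of_mem (him ha) (him hb))
  · rw [Complex.mul_im]
    exact mem_image2_of_mem (mem_image2_of_mem (hre ha) (him hb))
      (mem_image2_of_mem (him ha) (hre hb))

lemma isBounded_Bmat (Y : Matrix (Fin n) (Fin n) ℂ) {MJ : Fin n → Fin n → Set ℂ}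
    (hMJ : ∀ i j, IsBounded (MJ i j)) (i j : Fin n) : IsBounded (Bmat Y MJ i j) :=
  isBounded_sub isBounded_singleton <| Finset.sum_induction _ IsBounded
    (fun _ _ => isBounded_add) isBounded_singleton
    fun k _ => isBounded_cmul isBounded_singleton (hMJ k j)

lemma one_sub_mul_mem_Bmat (Y : Matrix (Fin n) (Fin n) ℂ) {MJ : Fin n → Fin n → Set ℂ}
    {J : Matrix (Fin n) (Fin n) ℂ} (hJ : ∀ k j, J k j ∈ MJ k j) (i j : Fin n) :
    (1 - Y * J) i j ∈ Bmat Y MJ i j := by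
  rw [Matrix.sub_apply, Matrix.one_apply, Matrix.mul_apply]
  exact sub_mem_sub rfl (Set.finsetSum_mem_finsetSum _ _ _ fun k _ => mul_mem_cmul rfl (hJ k j))

lemma norm_mulVec_le_of_norm_le {M : Matrix (Fin n) (Fin n) ℂ} {C : ℝ} (hC₀ : 0 ≤ C)
    (hC : ∀ i j, ‖M i j‖ ≤ C) (v : Fin n → ℂ) : ‖M *ᵥ v‖ ≤ n * C * ‖v‖ := by
  refine (pi_norm_le_iff_of_nonneg (by positivity)).2 fun i => ?_
  calc ‖(M *ᵥ v) i‖ ≤ ∑ j, ‖M i j‖ * ‖v j‖ := by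
        simpa only [mulVec, dotProduct, norm_mul] using
          norm_sum_le Finset.univ fun j => M i j * v j
    _ ≤ ∑ _j : Fin n, C * ‖v‖ :=
        Finset.sum_le_sum fun j _ => mul_le_mul (hC i j) (norm_le_pi_norm v j) (norm_nonneg _) hC₀
    _ = n * C * ‖v‖ := by simp [mul_assoc]

lemma opNormInf_nonneg (M : Matrix (Fin n) (Fin n) ℂ) : 0 ≤ opNormInf M :=
  Real.sSup_nonneg <| by rintro _ ⟨v, -, rfl⟩; exact norm_nonneg _

lemma imatNorm_nonneg (B : Fin n → Fin n → Set ℂ) : 0 ≤ imatNorm B :=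
  Real.sSup_nonneg <| by rintro _ ⟨M, -, rfl⟩; exact opNormInf_nonneg M

lemma opNormInf_le {M : Matrix (Fin n) (Fin n) ℂ} {C : ℝ} (hC : 0 ≤ C)
    (h : ∀ v, ‖M *ᵥ v‖ ≤ C * ‖v‖) : opNormInf M ≤ C :=
  Real.sSup_le (by rintro _ ⟨v, hv, rfl⟩; simpa [hv] using h v) hC

lemma norm_mulVec_le_opNormInf (M : Matrix (Fin n) (Fin n) ℂ) (v : Fin n → ℂ) :
    ‖M *ᵥ v‖ ≤ opNormInf M * ‖v‖ := by
  rcases eq_or_ne v 0 with rfl | hv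
  · simp
  set T := LinearMap.toContinuousLinearMap (toLin' M)
  have hbdd : BddAbove {r | ∃ u : Fin n → ℂ, ‖u‖ = 1 ∧ r = ‖M *ᵥ u‖} :=
    ⟨‖T‖, by rintro _ ⟨u, hu, rfl⟩; simpa [T, hu] using T.le_opNorm u⟩
  have hunit := le_csSup hbdd ⟨_, norm_smul_inv_norm (𝕜 := ℝ) hv, rfl⟩
  rw [mulVec_smul, norm_smul, norm_inv, RCLike.norm_ofReal, abs_norm] at hunit
  rwa [inv_mul_le_iff₀ (norm_pos_iff.2 hv), mul_comm] at hunit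

lemma opNormInf_le_imatNorm {B : Fin n → Fin n → Set ℂ} (hB : ∀ i j, IsBounded (B i j))
    {M : Matrix (Fin n) (Fin n) ℂ} (hM : ∀ i j, M i j ∈ B i j) : opNormInf M ≤ imatNorm B := by
  obtain ⟨C, hC₀, hC⟩ := (isBounded_iUnion.2 fun i => isBounded_iUnion.2 (hB i)).exists_pos_norm_le
  refine le_csSup ⟨n * C, ?_⟩ ⟨M, hM, rfl⟩
  rintro _ ⟨M', hM', rfl⟩
  exact opNormInf_le (by positivity) <| norm_mulVec_le_of_norm_le hC₀.le
    fun i j => hC _ (mem_iUnion.2 ⟨i, mem_iUnion.2 ⟨j, hM' i j⟩⟩)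

lemma norm_toContinuousLinearMap_toLin'_le (M : Matrix (Fin n) (Fin n) ℂ) :
    ‖LinearMap.toContinuousLinearMap (toLin' M)‖ ≤ opNormInf M :=
  ContinuousLinearMap.opNorm_le_bound _ (opNormInf_nonneg M) fun v => by
    simpa using norm_mulVec_le_opNormInf M v

lemma IsPolyMap.differentiable {F : (Fin n → ℂ) → Fin n → ℂ} (hF : IsPolyMap F) :
    Differentiable ℂ F :=
  differentiable_pi.2 fun i => by
    obtain ⟨p, hp⟩ := hF i
    rw [show (fun w => F w i) = (MvPolynomial.eval · p) from funext hp]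
    exact differentiableOn_univ.1 (AnalyticOnNhd.eval_mvPolynomial p).differentiableOn

lemma jac_mulVec {F : (Fin n → ℂ) → Fin n → ℂ} {z : Fin n → ℂ} (hF : DifferentiableAt ℂ F z)
    (v : Fin n → ℂ) : jac F z *ᵥ v = fderiv ℂ F z v := by
  have hjac : jac F z = LinearMap.toMatrix' (fderiv ℂ F z : (Fin n → ℂ) →ₗ[ℂ] Fin n → ℂ) := by
    ext i j
    simp [jac, (hasFDerivAt_pi'.1 hF.hasFDerivAt i).fderiv]
  rw [hjac, ← toLin'_apply, toLin'_toMatrix']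
  rfl

lemma hasFDerivAt_sub_mulVec (Y : Matrix (Fin n) (Fin n) ℂ) {F : (Fin n → ℂ) → Fin n → ℂ}
    {z : Fin n → ℂ} (hF : DifferentiableAt ℂ F z) :
    HasFDerivAt (fun w => w - Y *ᵥ F w)
      (LinearMap.toContinuousLinearMap (toLin' (1 - Y * jac F z))) z := by
  set Ycl := LinearMap.toContinuousLinearMap (toLin' Y)
  refine ((hasFDerivAt_id z).sub (Ycl.hasFDerivAt.comp z hF.hasFDerivAt)).congr_fderiv ?_
  ext1 v
  simp [Ycl, jac_mulVec hF]

theorem contraction_estimate (F : (Fin n → ℂ) → Fin n → ℂ) (hF : IsPolyMap F)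
    (IV : Fin n → Set ℂ) (hIV : ∀ j, IsRect (IV j))
    (Y : Matrix (Fin n) (Fin n) ℂ)
    (MJ : Fin n → Fin n → Set ℂ) (hMJr : ∀ i j, IsRect (MJ i j))
    (hMJ : ∀ z ∈ boxSet IV, ∀ i j, jac F z i j ∈ MJ i j)
    (z₀ z₁ : Fin n → ℂ) (hz₀ : z₀ ∈ boxSet IV) (hz₁ : z₁ ∈ boxSet IV) :
    ‖(z₀ - Y.mulVec (F z₀)) - (z₁ - Y.mulVec (F z₁))‖ ≤
      Real.sqrt 2 * imatNorm (Bmat Y MJ) * ‖z₀ - z₁‖ := by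
  have hderiv_le : ∀ z ∈ boxSet IV,
      ‖LinearMap.toContinuousLinearMap (toLin' (1 - Y * jac F z))‖ ≤
        imatNorm (Bmat Y MJ) := fun z hz =>
    (norm_toContinuousLinearMap_toLin'_le _).trans <|
      opNormInf_le_imatNorm (isBounded_Bmat Y fun i j => (hMJr i j).isBounded)
        (one_sub_mul_mem_Bmat Y (hMJ z hz))
  have hmvt := (convex_boxSet fun j => (hIV j).convex).norm_image_sub_le_of_norm_hasFDerivWithin_le
    (fun z _ => (hasFDerivAt_sub_mulVec Y (hF.differentiable z)).hasFDerivWithinAt)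
    hderiv_le hz₁ hz₀
  refine hmvt.trans (mul_le_mul_of_nonneg_right ?_ (norm_nonneg _))
  exact le_mul_of_one_le_left (imatNorm_nonneg _) (Real.one_le_sqrt.2 one_le_two)
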